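/- Let A be an associative ℚ-algebra and d, D, E, d_H, Γ ∈ A satisfy E = dD − Dd, ED − DE = −2·D·d_H + Γ, ΓD = DΓ, d_H·D = D·d_H. Suppose further D is nilpotent (so power series in D are finite sums). Then for any polynomial f, d·f(D) − f(D)·d = f'(D)·E − f''(D)·D·d_H + (1/2)·f''(D)·Γ. -/
import Mathlib


open Polynomial

lemma keyE {A : Type*} [Ring A] [Algebra ℚ A]
    (D E dH Γ : A)
    (hED : E * D - D * E = -(2 : ℚ) • (D * dH) + Γ)
    (hΓ : Γ * D = D * Γ)
    (hdH : dH * D = D * dH) :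
    ∀ n : ℕ, E * D ^ (n + 1)
      = D ^ (n + 1) * E - (2 * ((n : ℚ) + 1)) • (D ^ (n + 1) * dH)
        + ((n : ℚ) + 1) • (D ^ n * Γ) := by
  intro n
  induction n with
  | zero =>
    have h : E * D = D * E + (-(2 : ℚ) • (D * dH) + Γ) := by
      rw [← hED]; abel
    rw [pow_one, h]
    push_cast
    simp only [pow_zero, one_mul]
    module
  | succ n ih =>
    have h1 : E * D ^ (n + 2) = (E * D ^ (n + 1)) * D := by
      rw [mul_assoc, ← pow_succ]
    rw [h1, ih]
    have hED' : E * D = D * E + (-(2 : ℚ) • (D * dH) + Γ) := by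
      rw [← hED]; abel
    rw [add_mul, sub_mul, smul_mul_assoc, smul_mul_assoc,
      mul_assoc (D ^ (n+1)) E D, hED',
      mul_assoc (D ^ (n+1)) dH D, hdH,
      mul_assoc (D ^ n) Γ D, hΓ,
      ← mul_assoc (D ^ (n+1)) D dH, ← pow_succ,
      ← mul_assoc (D ^ n) D Γ, ← pow_succ]
    push_cast
    rw [mul_add (D ^ (n+1))]
    have : D ^ (n + 1) * (-(2:ℚ) • (D * dH) + Γ)
        = -(2:ℚ) • (D ^ (n+2) * dH) + D ^ (n+1) * Γ := by
      rw [mul_add, mul_smul_comm, ← mul_assoc, ← pow_succ]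
    rw [this]
    have h2 : D ^ (n + 1) * (D * E) = D ^ (n + 2) * E := by
      rw [← mul_assoc, ← pow_succ]
    rw [h2]
    simp only [show n + 1 + 1 = n + 2 from rfl]
    module

lemma keyd {A : Type*} [Ring A] [Algebra ℚ A]
    (d D E dH Γ : A)
    (hE : E = d * D - D * d)
    (hED : E * D - D * E = -(2 : ℚ) • (D * dH) + Γ)
    (hΓ : Γ * D = D * Γ)
    (hdH : dH * D = D * dH) :
    ∀ n : ℕ, d * D ^ (n + 2) - D ^ (n + 2) * d
      = ((n : ℚ) + 2) • (D ^ (n + 1) * E)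
        - (((n : ℚ) + 2) * ((n : ℚ) + 1)) • (D ^ (n + 1) * dH)
        + ((((n : ℚ) + 2) * ((n : ℚ) + 1)) / 2) • (D ^ n * Γ) := by
  have step : ∀ m : ℕ, d * D ^ (m + 1) - D ^ (m + 1) * d
      = E * D ^ m + D * (d * D ^ m - D ^ m * d) := by
    intro m
    rw [hE, pow_succ']
    noncomm_ring
  intro n
  induction n with
  | zero =>
    rw [step 1, keyE D E dH Γ hED hΓ hdH 0, pow_one]
    rw [← hE]
    push_cast
    simp only [pow_zero, one_mul]
    module
  | succ n ih =>
    rw [step (n + 2), keyE D E dH Γ hED hΓ hdH (n + 1), ih]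
    have h2 : ∀ x : A, D * (D ^ (n + 1) * x) = D ^ (n + 2) * x := by
      intro x; rw [← mul_assoc, ← pow_succ']
    have h3 : ∀ x : A, D * (D ^ n * x) = D ^ (n + 1) * x := by
      intro x; rw [← mul_assoc, ← pow_succ']
    have h4 : ∀ a b c : A, D * (a - b + c) = D * a - D * b + D * c := by
      intro a b c; noncomm_ring
    rw [h4, mul_smul_comm, mul_smul_comm, mul_smul_comm, h2, h2, h3]
    push_cast
    simp only [show n + 1 + 1 = n + 2 from rfl]
    match_scalars <;> ring


/-- d·f(D) − f(D)·d = f'(D)·E − f''(D)·D·d_H + (1/2)·f''(D)·Γ. -/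
theorem stmt3
    {A : Type*} [Ring A] [Algebra ℚ A]
    (d D E dH Γ : A)
    (hE : E = d * D - D * d)
    (hED : E * D - D * E = -(2 : ℚ) • (D * dH) + Γ)
    (hΓ : Γ * D = D * Γ)
    (hdH : dH * D = D * dH)
    (hnil : IsNilpotent D)
    (f : Polynomial ℚ) :
    d * aeval D f - aeval D f * d
      = aeval D (derivative f) * E
        - aeval D (derivative (derivative f)) * D * dH
        + (1 / 2 : ℚ) • (aeval D (derivative (derivative f)) * Γ) := by
  induction f using Polynomial.induction_on' with
  | add p q hp hq =>
    simp only [derivative_add, map_add]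
    have h0 : d * (aeval D p + aeval D q) - (aeval D p + aeval D q) * d
        = (d * aeval D p - aeval D p * d) + (d * aeval D q - aeval D q * d) := by
      noncomm_ring
    rw [h0, hp, hq]
    simp only [add_mul, smul_add]
    abel
  | monomial n a =>
    match n with
    | 0 =>
      simp [aeval_monomial, derivative_monomial, Algebra.commutes]
    | 1 =>
      simp only [aeval_monomial, derivative_monomial, Nat.cast_one, mul_one,
        pow_one, Nat.sub_self, pow_zero, ← Algebra.smul_def]
      rw [hE]
      simp only [derivative_monomial, Nat.cast_zero, mul_zero, map_zero, zero_mul,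
        mul_smul_comm, smul_mul_assoc]
      module
    | (n + 2) =>
      simp only [derivative_monomial, aeval_monomial, ← Algebra.smul_def]
      simp only [Nat.add_sub_cancel, Nat.succ_sub_one]
      rw [mul_smul_comm, smul_mul_assoc, ← smul_sub,
        keyd d D E dH Γ hE hED hΓ hdH n]
      simp only [smul_mul_assoc]
      have h5 : D ^ n * D * dH = D ^ (n + 1) * dH := by rw [← pow_succ]
      rw [h5]
      push_cast
      match_scalars <;> ring
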